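/- arXiv:1907.13504 — 7 statements merged into one kernel-verified Lean document; each statement's English description precedes it below -/
import Mathlib

section
/- Let (g,[·,·]_g) and (h,[·,·]_h) be Lie algebras and ρ: g → Der(h) a Lie algebra homomorphism into the derivations of h (an action of g on h). If T: h → g is an O-operator of weight 1, i.e. [Tu,Tv]_g = T(ρ(Tu)v − ρ(Tv)u + [u,v]_h) for all u,v ∈ h, then (h, [·,·]_h, ▷) with u▷v := ρ(Tu)v is a post-Lie algebra. -/
/-!
Writing `u ▷ v = ρ (T u) v`, the first post-Lie axiom is the derivation property of `ρ (T u)`.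
For the second, the O-operator identity rearranges to
`T ⁅u, v⁆ = ⁅T u, T v⁆ - T (u ▷ v) + T (v ▷ u)`; applying `ρ` and using that `ρ` is a Lie
homomorphism turns `ρ ⁅T u, T v⁆` into the commutator of `ρ (T u)` and `ρ (T v)`.
-/

section OOperator

variable {R : Type*} [CommRing R]
    {g : Type*} [LieRing g] [LieAlgebra R g]
    {h : Type*} [LieRing h] [LieAlgebra R h]
    {ρ : g →ₗ[R] h →ₗ[R] h} {T : h →ₗ[R] g}

theorem oOperator_map_lie
    (hT : ∀ u v : h, ⁅T u, T v⁆ = T (ρ (T u) v - ρ (T v) u + ⁅u, v⁆)) (u v : h) :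
    T ⁅u, v⁆ = ⁅T u, T v⁆ - T (ρ (T u) v) + T (ρ (T v) u) := by
  rw [hT, map_add, map_sub]
  abel

theorem oOperator_lie_act
    (hhom : ∀ (x y : g) (u : h), ρ ⁅x, y⁆ u = ρ x (ρ y u) - ρ y (ρ x u))
    (hT : ∀ u v : h, ⁅T u, T v⁆ = T (ρ (T u) v - ρ (T v) u + ⁅u, v⁆)) (u v w : h) :
    ρ (T ⁅u, v⁆) w =
      ρ (T u) (ρ (T v) w) - ρ (T (ρ (T u) v)) w
        - ρ (T v) (ρ (T u) w) + ρ (T (ρ (T v) u)) w := by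
  rw [oOperator_map_lie hT, map_add, map_sub, LinearMap.add_apply, LinearMap.sub_apply, hhom]
  abel

end OOperator

theorem oOperator_weightOne_inducesPostLie_general {K : Type*} [Field K]
    {g : Type*} [LieRing g] [LieAlgebra K g]
    {h : Type*} [LieRing h] [LieAlgebra K h]
    (ρ : g →ₗ[K] h →ₗ[K] h)
    (hder : ∀ (x : g) (u v : h), ρ x ⁅u, v⁆ = ⁅ρ x u, v⁆ + ⁅u, ρ x v⁆)
    (hhom : ∀ (x y : g) (u : h), ρ ⁅x, y⁆ u = ρ x (ρ y u) - ρ y (ρ x u))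
    (T : h →ₗ[K] g)
    (hT : ∀ u v : h, ⁅T u, T v⁆ = T (ρ (T u) v - ρ (T v) u + ⁅u, v⁆)) :
    (∀ u v w : h, ρ (T u) ⁅v, w⁆ = ⁅ρ (T u) v, w⁆ + ⁅v, ρ (T u) w⁆) ∧
    (∀ u v w : h, ρ (T ⁅u, v⁆) w =
      ρ (T u) (ρ (T v) w) - ρ (T (ρ (T u) v)) w
        - ρ (T v) (ρ (T u) w) + ρ (T (ρ (T v) u)) w) :=
  ⟨fun u => hder (T u), oOperator_lie_act hhom hT⟩

/-- An O-operator of weight 1 on a Lie algebra g with respect to an action on h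
induces a post-Lie algebra structure on h. -/
theorem oOperator_weightOne_inducesPostLie {K : Type*} [Field K] [CharZero K]
    {g : Type*} [LieRing g] [LieAlgebra K g]
    {h : Type*} [LieRing h] [LieAlgebra K h]
    (ρ : g →ₗ[K] h →ₗ[K] h)
    (hder : ∀ (x : g) (u v : h), ρ x ⁅u, v⁆ = ⁅ρ x u, v⁆ + ⁅u, ρ x v⁆)
    (hhom : ∀ (x y : g) (u : h), ρ ⁅x, y⁆ u = ρ x (ρ y u) - ρ y (ρ x u))
    (T : h →ₗ[K] g)
    (hT : ∀ u v : h, ⁅T u, T v⁆ = T (ρ (T u) v - ρ (T v) u + ⁅u, v⁆)) :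
    (∀ u v w : h, ρ (T u) ⁅v, w⁆ = ⁅ρ (T u) v, w⁆ + ⁅v, ρ (T u) w⁆) ∧
    (∀ u v w : h, ρ (T ⁅u, v⁆) w =
      ρ (T u) (ρ (T v) w) - ρ (T (ρ (T u) v)) w
        - ρ (T v) (ρ (T u) w) + ρ (T (ρ (T v) u)) w) :=
  oOperator_weightOne_inducesPostLie_general ρ hder hhom T hT
end

section
/- Let g be a Lie algebra and R: g → g a Rota-Baxter operator of weight 1, i.e. [R(x),R(y)] = R([R(x),y] + [x,R(y)] + [x,y]) for all x,y ∈ g. Then (g, [·,·], ▷) with x▷y := [R(x),y] is a post-Lie algebra. -/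
/-!
The first post-Lie axiom says that `ad (R x)` is a derivation, which is the Jacobi identity.
For the second, the weight-one Rota-Baxter identity rewrites `R ⁅x, y⁆` as
`⁅R x, R y⁆ - R ⁅R x, y⁆ + R ⁅R y, x⁆`, and `ad ⁅R x, R y⁆` is the commutator of `ad (R x)`
and `ad (R y)`, again by Jacobi.
-/

section RotaBaxter

variable {g : Type*} [LieRing g] (R : g →+ g)

theorem map_lie_eq_of_rotaBaxter
    (hR : ∀ x y : g, ⁅R x, R y⁆ = R (⁅R x, y⁆ + ⁅x, R y⁆ + ⁅x, y⁆)) (x y : g) :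
    R ⁅x, y⁆ = ⁅R x, R y⁆ - R ⁅R x, y⁆ + R ⁅R y, x⁆ := by
  rw [hR x y, map_add, map_add, ← lie_skew (R y) x, map_neg]
  abel

theorem lie_map_lie_eq_of_rotaBaxter
    (hR : ∀ x y : g, ⁅R x, R y⁆ = R (⁅R x, y⁆ + ⁅x, R y⁆ + ⁅x, y⁆)) (x y z : g) :
    ⁅R ⁅x, y⁆, z⁆ = ⁅R x, ⁅R y, z⁆⁆ - ⁅R ⁅R x, y⁆, z⁆ - ⁅R y, ⁅R x, z⁆⁆ + ⁅R ⁅R y, x⁆, z⁆ := by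
  rw [map_lie_eq_of_rotaBaxter R hR, add_lie, sub_lie, lie_lie]
  abel

end RotaBaxter

theorem rotaBaxter_weightOne_inducesPostLie_general {K : Type*} [Field K]
    {g : Type*} [LieRing g] [LieAlgebra K g]
    (R : g →ₗ[K] g)
    (hR : ∀ x y : g, ⁅R x, R y⁆ = R (⁅R x, y⁆ + ⁅x, R y⁆ + ⁅x, y⁆)) :
    (∀ x y z : g, ⁅R x, ⁅y, z⁆⁆ = ⁅⁅R x, y⁆, z⁆ + ⁅y, ⁅R x, z⁆⁆) ∧
    (∀ x y z : g, ⁅R ⁅x, y⁆, z⁆ =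
      ⁅R x, ⁅R y, z⁆⁆ - ⁅R ⁅R x, y⁆, z⁆ - ⁅R y, ⁅R x, z⁆⁆ + ⁅R ⁅R y, x⁆, z⁆) :=
  ⟨fun x _ _ => leibniz_lie (R x) _ _,
    lie_map_lie_eq_of_rotaBaxter R.toAddMonoidHom hR⟩

/-- A Rota-Baxter operator of weight 1 on a Lie algebra g induces a post-Lie algebra
structure on g via x ▷ y = [R x, y]. -/
theorem rotaBaxter_weightOne_inducesPostLie {K : Type*} [Field K] [CharZero K]
    {g : Type*} [LieRing g] [LieAlgebra K g]
    (R : g →ₗ[K] g)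
    (hR : ∀ x y : g, ⁅R x, R y⁆ = R (⁅R x, y⁆ + ⁅x, R y⁆ + ⁅x, y⁆)) :
    (∀ x y z : g, ⁅R x, ⁅y, z⁆⁆ = ⁅⁅R x, y⁆, z⁆ + ⁅y, ⁅R x, z⁆⁆) ∧
    (∀ x y z : g, ⁅R ⁅x, y⁆, z⁆ =
      ⁅R x, ⁅R y, z⁆⁆ - ⁅R ⁅R x, y⁆, z⁆ - ⁅R y, ⁅R x, z⁆⁆ + ⁅R ⁅R y, x⁆, z⁆) :=
  rotaBaxter_weightOne_inducesPostLie_general R hR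
end

section
/- Let g be a Lie algebra, ρ: g → gl(V) a representation on a vector space V, and T: V → g an O-operator of weight 0, i.e. [Tu,Tv] = T(ρ(Tu)v − ρ(Tv)u) for all u,v ∈ V. Then (V, ▷) with u▷v := ρ(Tu)v is a pre-Lie algebra, i.e. u▷(v▷w) − (u▷v)▷w = v▷(u▷w) − (v▷u)▷w for all u,v,w ∈ V. -/
theorem oOperator_weightZero_inducesPreLie_general {K : Type*} [Field K]
    {g : Type*} [LieRing g] [LieAlgebra K g]
    {V : Type*} [AddCommGroup V] [Module K V]
    (ρ : g →ₗ[K] V →ₗ[K] V)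
    (hhom : ∀ (x y : g) (v : V), ρ ⁅x, y⁆ v = ρ x (ρ y v) - ρ y (ρ x v))
    (T : V →ₗ[K] g)
    (hT : ∀ u v : V, ⁅T u, T v⁆ = T (ρ (T u) v - ρ (T v) u)) :
    ∀ u v w : V,
      ρ (T u) (ρ (T v) w) - ρ (T (ρ (T u) v)) w =
        ρ (T v) (ρ (T u) w) - ρ (T (ρ (T v) u)) w := by
  intro u v w
  have hbracket := hhom (T u) (T v) w
  rw [hT u v, map_sub, map_sub, LinearMap.sub_apply] at hbracket
  linear_combination (norm := abel) -hbracket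

/-- An O-operator of weight 0 induces a pre-Lie algebra structure on V. -/
theorem oOperator_weightZero_inducesPreLie {K : Type*} [Field K] [CharZero K]
    {g : Type*} [LieRing g] [LieAlgebra K g]
    {V : Type*} [AddCommGroup V] [Module K V]
    (ρ : g →ₗ[K] V →ₗ[K] V)
    (hhom : ∀ (x y : g) (v : V), ρ ⁅x, y⁆ v = ρ x (ρ y v) - ρ y (ρ x v))
    (T : V →ₗ[K] g)
    (hT : ∀ u v : V, ⁅T u, T v⁆ = T (ρ (T u) v - ρ (T v) u)) :
    ∀ u v w : V,
      ρ (T u) (ρ (T v) w) - ρ (T (ρ (T u) v)) w =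
        ρ (T v) (ρ (T u) w) - ρ (T (ρ (T v) u)) w :=
  oOperator_weightZero_inducesPreLie_general ρ hhom T hT
end

section
/- Let (V; ρ, μ, ν) be a representation of a post-Lie algebra (g, [·,·], ▷). Define on g ⊕ V the bracket [x₁+v₁, x₂+v₂]_ρ := [x₁,x₂] + ρ(x₁)v₂ − ρ(x₂)v₁ and the product (x₁+v₁) ▷' (x₂+v₂) := x₁▷x₂ + μ(x₁)v₂ + ν(x₂)v₁. Then (g ⊕ V, [·,·]_ρ, ▷') is a post-Lie algebra. -/
/-!
Each axiom for `g × V` splits into a `g`-component, which is the corresponding post-Lie axiom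
of `g`, and a `V`-component. Expanding the latter by linearity, the terms group by which
of the three slots carries the vector: in the Jacobi identity and in the two post-Lie axioms
each group is one instance of `hρ`, of `h1`/`h2`, or of `h3`/`h4` respectively.
-/

namespace PostLie

variable {K g V : Type*} [CommRing K] [LieRing g] [Module K g] [AddCommGroup V] [Module K V]

def semidirectBracket (ρ : g →ₗ[K] V →ₗ[K] V) (p q : g × V) : g × V :=
  (⁅p.1, q.1⁆, ρ p.1 q.2 - ρ q.1 p.2)

def semidirectAction (t : g →ₗ[K] g →ₗ[K] g) (μ ν : g →ₗ[K] V →ₗ[K] V) (p q : g × V) :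
    g × V :=
  (t p.1 q.1, μ p.1 q.2 + ν q.1 p.2)

theorem semidirectBracket_skew (ρ : g →ₗ[K] V →ₗ[K] V) (p q : g × V) :
    semidirectBracket ρ p q = -semidirectBracket ρ q p := by
  ext
  · exact (lie_skew p.1 q.1).symm
  · simp only [semidirectBracket, Prod.snd_neg, neg_sub]

theorem semidirectBracket_leibniz {ρ : g →ₗ[K] V →ₗ[K] V}
    (hρ : ∀ (x y : g) (v : V), ρ ⁅x, y⁆ v = ρ x (ρ y v) - ρ y (ρ x v)) (p q r : g × V) :
    semidirectBracket ρ p (semidirectBracket ρ q r) =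
      semidirectBracket ρ (semidirectBracket ρ p q) r +
        semidirectBracket ρ q (semidirectBracket ρ p r) := by
  ext
  · exact leibniz_lie p.1 q.1 r.1
  · simp only [semidirectBracket, Prod.snd_add, map_sub, hρ]
    abel

theorem semidirectAction_isDerivation {t : g →ₗ[K] g →ₗ[K] g} {ρ μ ν : g →ₗ[K] V →ₗ[K] V}
    (hpost1 : ∀ x y z : g, t x ⁅y, z⁆ = ⁅t x y, z⁆ + ⁅y, t x z⁆)
    (h1 : ∀ (x y : g) (v : V), ρ (t x y) v = μ x (ρ y v) - ρ y (μ x v))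
    (h2 : ∀ (x y : g) (v : V), ν ⁅x, y⁆ v = ρ x (ν y v) - ρ y (ν x v)) (p q r : g × V) :
    semidirectAction t μ ν p (semidirectBracket ρ q r) =
      semidirectBracket ρ (semidirectAction t μ ν p q) r +
        semidirectBracket ρ q (semidirectAction t μ ν p r) := by
  ext
  · exact hpost1 p.1 q.1 r.1
  · simp only [semidirectAction, semidirectBracket, Prod.snd_add, map_add, map_sub, h1, h2]
    abel

theorem semidirectAction_bracket_eq_associator {t : g →ₗ[K] g →ₗ[K] g}
    {ρ μ ν : g →ₗ[K] V →ₗ[K] V}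
    (hpost2 : ∀ x y z : g,
      t ⁅x, y⁆ z = t x (t y z) - t (t x y) z - t y (t x z) + t (t y x) z)
    (h3 : ∀ (x y : g) (v : V),
      μ ⁅x, y⁆ v = μ x (μ y v) - μ (t x y) v - μ y (μ x v) + μ (t y x) v)
    (h4 : ∀ (x y : g) (v : V),
      ν y (ρ x v) = μ x (ν y v) - ν y (μ x v) - ν (t x y) v + ν y (ν x v))
    (p q r : g × V) :
    semidirectAction t μ ν (semidirectBracket ρ p q) r =
      semidirectAction t μ ν p (semidirectAction t μ ν q r) -
        semidirectAction t μ ν (semidirectAction t μ ν p q) r -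
        semidirectAction t μ ν q (semidirectAction t μ ν p r) +
        semidirectAction t μ ν (semidirectAction t μ ν q p) r := by
  ext
  · exact hpost2 p.1 q.1 r.1
  · simp only [semidirectAction, semidirectBracket, Prod.snd_add, Prod.snd_sub, map_add,
      map_sub, h3, h4]
    abel

end PostLie

open PostLie in
theorem postLie_semidirectProduct_general {K : Type*} [Field K]
    {g : Type*} [LieRing g] [LieAlgebra K g]
    {V : Type*} [AddCommGroup V] [Module K V]
    (t : g →ₗ[K] g →ₗ[K] g)
    (hpost1 : ∀ x y z : g, t x ⁅y, z⁆ = ⁅t x y, z⁆ + ⁅y, t x z⁆)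
    (hpost2 : ∀ x y z : g,
      t ⁅x, y⁆ z = t x (t y z) - t (t x y) z - t y (t x z) + t (t y x) z)
    (ρ μ ν : g →ₗ[K] V →ₗ[K] V)
    (hρ : ∀ (x y : g) (v : V), ρ ⁅x, y⁆ v = ρ x (ρ y v) - ρ y (ρ x v))
    (h1 : ∀ (x y : g) (v : V), ρ (t x y) v = μ x (ρ y v) - ρ y (μ x v))
    (h2 : ∀ (x y : g) (v : V), ν ⁅x, y⁆ v = ρ x (ν y v) - ρ y (ν x v))
    (h3 : ∀ (x y : g) (v : V),
      μ ⁅x, y⁆ v = μ x (μ y v) - μ (t x y) v - μ y (μ x v) + μ (t y x) v)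
    (h4 : ∀ (x y : g) (v : V),
      ν y (ρ x v) = μ x (ν y v) - ν y (μ x v) - ν (t x y) v + ν y (ν x v))
    (B P : g × V → g × V → g × V)
    (hB : ∀ p q, B p q = (⁅p.1, q.1⁆, ρ p.1 q.2 - ρ q.1 p.2))
    (hP : ∀ p q, P p q = (t p.1 q.1, μ p.1 q.2 + ν q.1 p.2)) :
    (∀ p q, B p q = -B q p) ∧
    (∀ p q r, B p (B q r) = B (B p q) r + B q (B p r)) ∧
    (∀ p q r, P p (B q r) = B (P p q) r + B q (P p r)) ∧
    (∀ p q r, P (B p q) r =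
      P p (P q r) - P (P p q) r - P q (P p r) + P (P q p) r) := by
  obtain rfl : B = semidirectBracket ρ := funext₂ hB
  obtain rfl : P = semidirectAction t μ ν := funext₂ hP
  exact ⟨semidirectBracket_skew ρ, semidirectBracket_leibniz hρ,
    semidirectAction_isDerivation hpost1 h1 h2,
    semidirectAction_bracket_eq_associator hpost2 h3 h4⟩

/-- The semidirect product of a post-Lie algebra with a representation is a post-Lie algebra. -/
theorem postLie_semidirectProduct {K : Type*} [Field K] [CharZero K]
    {g : Type*} [LieRing g] [LieAlgebra K g]
    {V : Type*} [AddCommGroup V] [Module K V]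
    (t : g →ₗ[K] g →ₗ[K] g)
    (hpost1 : ∀ x y z : g, t x ⁅y, z⁆ = ⁅t x y, z⁆ + ⁅y, t x z⁆)
    (hpost2 : ∀ x y z : g,
      t ⁅x, y⁆ z = t x (t y z) - t (t x y) z - t y (t x z) + t (t y x) z)
    (ρ μ ν : g →ₗ[K] V →ₗ[K] V)
    (hρ : ∀ (x y : g) (v : V), ρ ⁅x, y⁆ v = ρ x (ρ y v) - ρ y (ρ x v))
    (h1 : ∀ (x y : g) (v : V), ρ (t x y) v = μ x (ρ y v) - ρ y (μ x v))
    (h2 : ∀ (x y : g) (v : V), ν ⁅x, y⁆ v = ρ x (ν y v) - ρ y (ν x v))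
    (h3 : ∀ (x y : g) (v : V),
      μ ⁅x, y⁆ v = μ x (μ y v) - μ (t x y) v - μ y (μ x v) + μ (t y x) v)
    (h4 : ∀ (x y : g) (v : V),
      ν y (ρ x v) = μ x (ν y v) - ν y (μ x v) - ν (t x y) v + ν y (ν x v))
    (B P : g × V → g × V → g × V)
    (hB : ∀ p q, B p q = (⁅p.1, q.1⁆, ρ p.1 q.2 - ρ q.1 p.2))
    (hP : ∀ p q, P p q = (t p.1 q.1, μ p.1 q.2 + ν q.1 p.2)) :
    (∀ p q, B p q = -B q p) ∧
    (∀ p q r, B p (B q r) = B (B p q) r + B q (B p r)) ∧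
    (∀ p q r, P p (B q r) = B (P p q) r + B q (P p r)) ∧
    (∀ p q r, P (B p q) r =
      P p (P q r) - P (P p q) r - P q (P p r) + P (P q p) r) :=
  postLie_semidirectProduct_general t hpost1 hpost2 ρ μ ν hρ h1 h2 h3 h4 B P hB hP
end

section
/- Let (V; ρ, μ, ν) be a representation of a post-Lie algebra (g, [·,·], ▷). Then the linear map ρ + μ − ν: g → gl(V) is a representation of the sub-adjacent Lie algebra (g, [·,·]_C), where [x,y]_C = x▷y − y▷x + [x,y]. That is, (ρ+μ−ν)([x,y]_C) = (ρ+μ−ν)(x)∘(ρ+μ−ν)(y) − (ρ+μ−ν)(y)∘(ρ+μ−ν)(x). -/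
/-!
Work in the associative algebra `Module.End K V`, where `⁅f, h⁆ = f * h - h * f`. Each of `ρ`, `μ`, `ν`
sends the sub-adjacent bracket to an explicit sum of commutators: the `μ (x ▷ y)` and `μ (y ▷ x)` terms
of the third axiom cancel against those of `[x, y]_C`, so `μ` alone is already a representation of the
sub-adjacent Lie algebra, while `ρ` and `ν` produce the mixed commutators. Expanding
`⁅ρ x + μ x - ν x, ρ y + μ y - ν y⁆` bilinearly gives exactly the same sum.
-/

namespace PostLie

attribute [local instance] LieRing.ofAssociativeRing

variable {K g V : Type*} [CommRing K] [LieRing g] [LieAlgebra K g] [AddCommGroup V] [Module K V]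
  (t : g →ₗ[K] g →ₗ[K] g) (ρ μ ν : g →ₗ[K] Module.End K V)

def subadjacentBracket (x y : g) : g := t x y - t y x + ⁅x, y⁆

theorem rho_map_subadjacentBracket (hρ : ∀ x y, ρ ⁅x, y⁆ = ⁅ρ x, ρ y⁆)
    (h1 : ∀ x y, ρ (t x y) = ⁅μ x, ρ y⁆) (x y : g) :
    ρ (subadjacentBracket t x y) = ⁅μ x, ρ y⁆ + ⁅ρ x, μ y⁆ + ⁅ρ x, ρ y⁆ := by
  rw [subadjacentBracket, map_add, map_sub, h1, h1, hρ, ← lie_skew (μ y) (ρ x)]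
  abel

theorem mu_map_subadjacentBracket
    (h3 : ∀ x y, μ ⁅x, y⁆ = ⁅μ x, μ y⁆ - μ (t x y) + μ (t y x)) (x y : g) :
    μ (subadjacentBracket t x y) = ⁅μ x, μ y⁆ := by
  rw [subadjacentBracket, map_add, map_sub, h3]
  abel

theorem nu_map_subadjacentBracket (h2 : ∀ x y, ν ⁅x, y⁆ = ρ x * ν y - ρ y * ν x)
    (h4 : ∀ x y, ν (t x y) = ⁅μ x, ν y⁆ + ν y * ν x - ν y * ρ x) (x y : g) :
    ν (subadjacentBracket t x y) =
      ⁅μ x, ν y⁆ + ⁅ν x, μ y⁆ + ⁅ρ x, ν y⁆ + ⁅ν x, ρ y⁆ - ⁅ν x, ν y⁆ := by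
  rw [subadjacentBracket, map_add, map_sub, h2, h4, h4]
  simp only [Ring.lie_def]
  abel

theorem map_subadjacentBracket (hρ : ∀ x y, ρ ⁅x, y⁆ = ⁅ρ x, ρ y⁆)
    (h1 : ∀ x y, ρ (t x y) = ⁅μ x, ρ y⁆) (h2 : ∀ x y, ν ⁅x, y⁆ = ρ x * ν y - ρ y * ν x)
    (h3 : ∀ x y, μ ⁅x, y⁆ = ⁅μ x, μ y⁆ - μ (t x y) + μ (t y x))
    (h4 : ∀ x y, ν (t x y) = ⁅μ x, ν y⁆ + ν y * ν x - ν y * ρ x) (x y : g) :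
    (ρ + μ - ν) (subadjacentBracket t x y) = ⁅(ρ + μ - ν) x, (ρ + μ - ν) y⁆ := by
  simp only [LinearMap.sub_apply, LinearMap.add_apply,
    rho_map_subadjacentBracket t ρ μ hρ h1, mu_map_subadjacentBracket t μ h3,
    nu_map_subadjacentBracket t ρ μ ν h2 h4, lie_add, add_lie, lie_sub, sub_lie]
  abel

end PostLie

theorem postLie_rep_subadjacent_general {K : Type*} [Field K]
    {g : Type*} [LieRing g] [LieAlgebra K g]
    {V : Type*} [AddCommGroup V] [Module K V]
    (t : g →ₗ[K] g →ₗ[K] g)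
    (ρ μ ν : g →ₗ[K] V →ₗ[K] V)
    (hρ : ∀ (x y : g) (v : V), ρ ⁅x, y⁆ v = ρ x (ρ y v) - ρ y (ρ x v))
    (h1 : ∀ (x y : g) (v : V), ρ (t x y) v = μ x (ρ y v) - ρ y (μ x v))
    (h2 : ∀ (x y : g) (v : V), ν ⁅x, y⁆ v = ρ x (ν y v) - ρ y (ν x v))
    (h3 : ∀ (x y : g) (v : V),
      μ ⁅x, y⁆ v = μ x (μ y v) - μ (t x y) v - μ y (μ x v) + μ (t y x) v)
    (h4 : ∀ (x y : g) (v : V),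
      ν y (ρ x v) = μ x (ν y v) - ν y (μ x v) - ν (t x y) v + ν y (ν x v))
    (r : g → V → V)
    (hr : ∀ (x : g) (v : V), r x v = ρ x v + μ x v - ν x v) :
    ∀ (x y : g) (v : V),
      r (t x y - t y x + ⁅x, y⁆) v = r x (r y v) - r y (r x v) := by
  obtain rfl : r = fun x => ⇑((ρ + μ - ν) x) := by
    funext x v
    simp [hr]
  have key := PostLie.map_subadjacentBracket t ρ μ ν
    (fun x y => LinearMap.ext fun v => by simp [Ring.lie_def, hρ])
    (fun x y => LinearMap.ext fun v => by simp [Ring.lie_def, h1])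
    (fun x y => LinearMap.ext fun v => by simp [h2])
    (fun x y => LinearMap.ext fun v => by simp [Ring.lie_def, h3]; abel)
    (fun x y => LinearMap.ext fun v => by simp [Ring.lie_def, h4])
  intro x y v
  simpa [PostLie.subadjacentBracket, Ring.lie_def] using LinearMap.congr_fun (key x y) v

/-- ρ + μ − ν is a representation of the sub-adjacent Lie algebra. -/
theorem postLie_rep_subadjacent {K : Type*} [Field K] [CharZero K]
    {g : Type*} [LieRing g] [LieAlgebra K g]
    {V : Type*} [AddCommGroup V] [Module K V]
    (t : g →ₗ[K] g →ₗ[K] g)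
    (hpost1 : ∀ x y z : g, t x ⁅y, z⁆ = ⁅t x y, z⁆ + ⁅y, t x z⁆)
    (hpost2 : ∀ x y z : g,
      t ⁅x, y⁆ z = t x (t y z) - t (t x y) z - t y (t x z) + t (t y x) z)
    (ρ μ ν : g →ₗ[K] V →ₗ[K] V)
    (hρ : ∀ (x y : g) (v : V), ρ ⁅x, y⁆ v = ρ x (ρ y v) - ρ y (ρ x v))
    (h1 : ∀ (x y : g) (v : V), ρ (t x y) v = μ x (ρ y v) - ρ y (μ x v))
    (h2 : ∀ (x y : g) (v : V), ν ⁅x, y⁆ v = ρ x (ν y v) - ρ y (ν x v))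
    (h3 : ∀ (x y : g) (v : V),
      μ ⁅x, y⁆ v = μ x (μ y v) - μ (t x y) v - μ y (μ x v) + μ (t y x) v)
    (h4 : ∀ (x y : g) (v : V),
      ν y (ρ x v) = μ x (ν y v) - ν y (μ x v) - ν (t x y) v + ν y (ν x v))
    (r : g → V → V)
    (hr : ∀ (x : g) (v : V), r x v = ρ x v + μ x v - ν x v) :
    ∀ (x y : g) (v : V),
      r (t x y - t y x + ⁅x, y⁆) v = r x (r y v) - r y (r x v) :=
  postLie_rep_subadjacent_general t ρ μ ν hρ h1 h2 h3 h4 r hr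
end

section
/- Let (V; ρ, μ, ν) be a representation of a post-Lie algebra (g, [·,·], ▷), and let Der(g,V) = {f ∈ Hom(g,V) | f([x,y]) = ρ(x)f(y) − ρ(y)f(x)}. Define ρ̂: g → End(Der(g,V)) by (ρ̂(x)(f))(y) := μ(x)f(y) + ν(y)f(x) − f(x▷y). Then for every x, ρ̂(x) maps Der(g,V) into itself, and ρ̂ is a representation of the sub-adjacent Lie algebra (g, [·,·]_C) on Der(g,V): ρ̂([x,y]_C) = ρ̂(x)∘ρ̂(y) − ρ̂(y)∘ρ̂(x). -/
/-!
Both statements are direct expansions. That `ρ̂(x) f` is again a derivation follows from the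
derivation property of `x ▷ -` on `[·,·]` together with the compatibilities of `ρ` with `μ` and
of `ν` with `ρ`. For the bracket, the `μμ`-terms are matched by the third representation axiom,
the `f(▷▷)`-terms by the second post-Lie axiom, and the terms that are linear in `f y` (resp.
`f x`) combine, by the fourth representation axiom, into `ν z (ρ x (f y))` (resp. with `x, y`
swapped), which is exactly what `f ⁅x, y⁆` contributes.
-/

namespace PostLie

variable {K g V : Type*} [CommRing K] [LieRing g] [LieAlgebra K g] [AddCommGroup V] [Module K V]

/-- `Der(g,V)` consists of the linear maps satisfying this. -/
def IsDerivation (ρ : g →ₗ[K] V →ₗ[K] V) (f : g → V) : Prop :=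
  ∀ a b : g, f ⁅a, b⁆ = ρ a (f b) - ρ b (f a)

/-- The map `ρ̂` of the paper, with `t x y` standing for `x ▷ y`. -/
def derivAction (t : g →ₗ[K] g →ₗ[K] g) (μ ν : g →ₗ[K] V →ₗ[K] V) (x : g) (f : g → V) :
    g → V :=
  fun y => μ x (f y) + ν y (f x) - f (t x y)

theorem isDerivation_derivAction {t : g →ₗ[K] g →ₗ[K] g} {ρ μ ν : g →ₗ[K] V →ₗ[K] V}
    (hpost1 : ∀ x y z : g, t x ⁅y, z⁆ = ⁅t x y, z⁆ + ⁅y, t x z⁆)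
    (h1 : ∀ (x y : g) (v : V), ρ (t x y) v = μ x (ρ y v) - ρ y (μ x v))
    (h2 : ∀ (x y : g) (v : V), ν ⁅x, y⁆ v = ρ x (ν y v) - ρ y (ν x v))
    {f : g →ₗ[K] V} (hf : IsDerivation ρ f) (x : g) :
    IsDerivation ρ (derivAction t μ ν x f) := by
  intro a b
  simp only [derivAction]
  rw [hf, hpost1, map_add, hf, hf, h2, h1 x a (f b), h1 x b (f a)]
  simp only [map_sub, map_add]
  abel

theorem derivAction_subadjacent_bracket {t : g →ₗ[K] g →ₗ[K] g} {ρ μ ν : g →ₗ[K] V →ₗ[K] V}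
    (hpost2 : ∀ x y z : g,
      t ⁅x, y⁆ z = t x (t y z) - t (t x y) z - t y (t x z) + t (t y x) z)
    (h3 : ∀ (x y : g) (v : V),
      μ ⁅x, y⁆ v = μ x (μ y v) - μ (t x y) v - μ y (μ x v) + μ (t y x) v)
    (h4 : ∀ (x y : g) (v : V),
      ν y (ρ x v) = μ x (ν y v) - ν y (μ x v) - ν (t x y) v + ν y (ν x v))
    {f : g →ₗ[K] V} (hf : IsDerivation ρ f) (x y : g) :
    derivAction t μ ν (t x y - t y x + ⁅x, y⁆) f =
      derivAction t μ ν x (derivAction t μ ν y f) -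
        derivAction t μ ν y (derivAction t μ ν x f) := by
  funext z
  simp only [derivAction, Pi.sub_apply, map_sub, map_add, LinearMap.sub_apply,
    LinearMap.add_apply, hf x y, hpost2, h3]
  rw [h4 x z (f y), h4 y z (f x)]
  abel

end PostLie

theorem postLie_rep_on_derivations_general {K : Type*} [Field K]
    {g : Type*} [LieRing g] [LieAlgebra K g]
    {V : Type*} [AddCommGroup V] [Module K V]
    (t : g →ₗ[K] g →ₗ[K] g)
    (hpost1 : ∀ x y z : g, t x ⁅y, z⁆ = ⁅t x y, z⁆ + ⁅y, t x z⁆)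
    (hpost2 : ∀ x y z : g,
      t ⁅x, y⁆ z = t x (t y z) - t (t x y) z - t y (t x z) + t (t y x) z)
    (ρ μ ν : g →ₗ[K] V →ₗ[K] V)
    (h1 : ∀ (x y : g) (v : V), ρ (t x y) v = μ x (ρ y v) - ρ y (μ x v))
    (h2 : ∀ (x y : g) (v : V), ν ⁅x, y⁆ v = ρ x (ν y v) - ρ y (ν x v))
    (h3 : ∀ (x y : g) (v : V),
      μ ⁅x, y⁆ v = μ x (μ y v) - μ (t x y) v - μ y (μ x v) + μ (t y x) v)
    (h4 : ∀ (x y : g) (v : V),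
      ν y (ρ x v) = μ x (ν y v) - ν y (μ x v) - ν (t x y) v + ν y (ν x v))
    (hat : g → (g → V) → (g → V))
    (hhat : ∀ (x : g) (f : g → V) (y : g),
      hat x f y = μ x (f y) + ν y (f x) - f (t x y)) :
    (∀ (x : g) (f : g →ₗ[K] V),
      (∀ a b : g, f ⁅a, b⁆ = ρ a (f b) - ρ b (f a)) →
      ∀ a b : g, hat x ⇑f ⁅a, b⁆ = ρ a (hat x ⇑f b) - ρ b (hat x ⇑f a)) ∧
    (∀ (x y : g) (f : g →ₗ[K] V),
      (∀ a b : g, f ⁅a, b⁆ = ρ a (f b) - ρ b (f a)) →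
      ∀ z : g, hat (t x y - t y x + ⁅x, y⁆) ⇑f z =
        hat x (hat y ⇑f) z - hat y (hat x ⇑f) z) := by
  obtain rfl : hat = PostLie.derivAction t μ ν :=
    funext fun x => funext fun f => funext (hhat x f)
  exact ⟨fun x f hf => PostLie.isDerivation_derivAction hpost1 h1 h2 hf x,
    fun x y f hf => congrFun (PostLie.derivAction_subadjacent_bracket hpost2 h3 h4 hf x y)⟩

/-- ρ̂(x)(f)(y) = μ(x)f(y) + ν(y)f(x) − f(x▷y) preserves Der(g,V) and defines a
representation of the sub-adjacent Lie algebra on Der(g,V). -/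
theorem postLie_rep_on_derivations {K : Type*} [Field K] [CharZero K]
    {g : Type*} [LieRing g] [LieAlgebra K g]
    {V : Type*} [AddCommGroup V] [Module K V]
    (t : g →ₗ[K] g →ₗ[K] g)
    (hpost1 : ∀ x y z : g, t x ⁅y, z⁆ = ⁅t x y, z⁆ + ⁅y, t x z⁆)
    (hpost2 : ∀ x y z : g,
      t ⁅x, y⁆ z = t x (t y z) - t (t x y) z - t y (t x z) + t (t y x) z)
    (ρ μ ν : g →ₗ[K] V →ₗ[K] V)
    (hρ : ∀ (x y : g) (v : V), ρ ⁅x, y⁆ v = ρ x (ρ y v) - ρ y (ρ x v))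
    (h1 : ∀ (x y : g) (v : V), ρ (t x y) v = μ x (ρ y v) - ρ y (μ x v))
    (h2 : ∀ (x y : g) (v : V), ν ⁅x, y⁆ v = ρ x (ν y v) - ρ y (ν x v))
    (h3 : ∀ (x y : g) (v : V),
      μ ⁅x, y⁆ v = μ x (μ y v) - μ (t x y) v - μ y (μ x v) + μ (t y x) v)
    (h4 : ∀ (x y : g) (v : V),
      ν y (ρ x v) = μ x (ν y v) - ν y (μ x v) - ν (t x y) v + ν y (ν x v))
    (hat : g → (g → V) → (g → V))
    (hhat : ∀ (x : g) (f : g → V) (y : g),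
      hat x f y = μ x (f y) + ν y (f x) - f (t x y)) :
    (∀ (x : g) (f : g →ₗ[K] V),
      (∀ a b : g, f ⁅a, b⁆ = ρ a (f b) - ρ b (f a)) →
      ∀ a b : g, hat x ⇑f ⁅a, b⁆ = ρ a (hat x ⇑f b) - ρ b (hat x ⇑f a)) ∧
    (∀ (x y : g) (f : g →ₗ[K] V),
      (∀ a b : g, f ⁅a, b⁆ = ρ a (f b) - ρ b (f a)) →
      ∀ z : g, hat (t x y - t y x + ⁅x, y⁆) ⇑f z =
        hat x (hat y ⇑f) z - hat y (hat x ⇑f) z) :=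
  postLie_rep_on_derivations_general t hpost1 hpost2 ρ μ ν h1 h2 h3 h4 hat hhat
end

section
/- Let (h, [·,·]_h) be a Lie algebra and g = Der(h) its derivation Lie algebra, acting on h tautologically. A linear map L: h → Der(h) is a Maurer-Cartan element of the graded Lie algebra structure (with differential ∂) on ⊕ₙ Hom(∧ⁿh, Der(h)), i.e. ∂L + ½[L,L]^c = 0, if and only if the bilinear operation u▷v := L(u)(v) makes (h, [·,·]_h, ▷) a post-Lie algebra. Here (∂L)(u₁,u₂) = −L([u₁,u₂]_h) and [L,L]^c(u₁,u₂) = −2L(L(u₁)u₂) + 2L(L(u₂)u₁) + 2[L(u₁),L(u₂)], with [L(u₁),L(u₂)] the commutator bracket of derivations, so that ∂L + ½[L,L]^c = 0 is equivalent to [L(u),L(v)] − L(L(u)v) + L(L(v)u) − L([u,v]_h) = 0 for all u,v ∈ h. -/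
/-- A linear map L : h → Der(h) is a Maurer-Cartan element (∂L + ½[L,L]^c = 0) if and only
if u ▷ v := L(u)(v) defines a post-Lie algebra structure on (h,[·,·]). -/
theorem maurerCartan_iff_postLie {K : Type*} [Field K] [CharZero K]
    {h : Type*} [LieRing h] [LieAlgebra K h]
    (L : h →ₗ[K] h →ₗ[K] h)
    (hLder : ∀ u v w : h, L u ⁅v, w⁆ = ⁅L u v, w⁆ + ⁅v, L u w⁆)
    (dL : h → h → h →ₗ[K] h)
    (hdL : ∀ u v : h, dL u v = -L ⁅u, v⁆)
    (br : h → h → h →ₗ[K] h)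
    (hbr : ∀ u v : h, br u v =
      -(2 : K) • L (L u v) + (2 : K) • L (L v u)
        + (2 : K) • ((L u).comp (L v) - (L v).comp (L u))) :
    (∀ u v : h, dL u v + (2 : K)⁻¹ • br u v = 0) ↔
    ((∀ u v w : h, L u ⁅v, w⁆ = ⁅L u v, w⁆ + ⁅v, L u w⁆) ∧
     (∀ u v w : h, L ⁅u, v⁆ w =
        L u (L v w) - L (L u v) w - L v (L u w) + L (L v u) w)) := by
  have h2 : (2 : K) ≠ 0 := two_ne_zero
  constructor
  · intro H
    refine ⟨hLder, fun u v w => ?_⟩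
    have := congrArg (fun f => f w) (H u v)
    simp only [hdL, hbr, LinearMap.add_apply, LinearMap.smul_apply, LinearMap.neg_apply,
      LinearMap.sub_apply, LinearMap.comp_apply, LinearMap.zero_apply, smul_add, smul_sub,
      smul_neg, smul_smul, inv_mul_cancel₀ h2, one_smul, LinearMap.zero_apply] at this
    have := this
    linear_combination (norm := module) -this
  · rintro ⟨-, H⟩ u v
    ext w
    have := H u v w
    simp only [hdL, hbr, LinearMap.add_apply, LinearMap.smul_apply, LinearMap.neg_apply,
      LinearMap.sub_apply, LinearMap.comp_apply, LinearMap.zero_apply, smul_add, smul_sub,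
      smul_neg, smul_smul, inv_mul_cancel₀ h2, one_smul]
    linear_combination (norm := module) -this
end
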